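/- arXiv:1411.6851 — 2 statements merged into one kernel-verified Lean document; each statement's English description precedes it below -/
import Mathlib

section
/- Let (M, g₀) be a compact Riemannian manifold of dimension n ≥ 3 with smooth boundary. Let w ∈ C²(M) satisfy 0 < w ≤ 1 in M, w = 1 on ∂M, and Δ_{g₀} w ≤ A_w w, where A_w = ((n−2)/(4(n−1))) χ_{{w<1}} R_{g₀}(1 − w^{4/(n−2)}). Then the conformal metric g̃ = w^{4/(n−2)} g₀ satisfies R_{g̃} ≥ R_{g₀} in M and H_{g̃} ≥ H_{g₀} on ∂M. -/
open Real

/-- **Barbosa–Mirandola–Vitório, curvature comparison step in dimension `n ≥ 3` (abstract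
formulation).**  `(M, g₀)` is a compact Riemannian `n`-manifold (`n ≥ 3`) with nonempty
boundary `bdry`, Laplace–Beltrami operator `Δ` and outward normal derivative `Dη` of `g₀`
(the latter characterised by nonnegativity at boundary maximum points), scalar curvature
`R0` and boundary mean curvature `H0`.  Let `w ∈ C²(M)` satisfy `0 < w ≤ 1` in `M`,
`w = 1` on `∂M`, and `Δw ≤ A_w w` where
`A_w = ((n−2)/(4(n−1))) χ_{w<1} R₀ (1 − w^{4/(n−2)})`.

Then the conformal metric `g̃ = w^{4/(n−2)} g₀`, whose scalar curvature is
`R_{g̃} = w^{−(n+2)/(n−2)}(R₀ w − (4(n−1)/(n−2)) Δw)` and whose boundary mean curvature is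
`H_{g̃} = w^{−n/(n−2)}(H₀ + (2(n−1)/(n−2)) ∂w/∂η)`, satisfies `R_{g̃} ≥ R₀` in `M` and
`H_{g̃} ≥ H₀` on `∂M`. -/
theorem conformal_curvature_comparison_dim_ge_three
    {M : Type*} [TopologicalSpace M] [CompactSpace M]
    (n : ℕ) (hn : 3 ≤ n)
    (bdry : Set M) (hbdry : bdry.Nonempty)
    (Δ : (M → ℝ) → M → ℝ)           -- Laplace–Beltrami operator of g₀
    (Dη : (M → ℝ) → M → ℝ)          -- outward normal derivative along ∂M
    -- Dη is an *outward* derivative: at a boundary point where h attains its maximum,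
    -- the outward normal derivative is nonnegative:
    (hDη : ∀ h : M → ℝ, ∀ x ∈ bdry, (∀ y, h y ≤ h x) → 0 ≤ Dη h x)
    (R0 : M → ℝ)                     -- scalar curvature of g₀
    (H0 : M → ℝ)                     -- mean curvature of ∂M in g₀
    (w : M → ℝ) (hwc : Continuous w) -- w ∈ C²(M)
    (hwpos : ∀ x, 0 < w x) (hwle : ∀ x, w x ≤ 1)
    (hwbdry : ∀ x ∈ bdry, w x = 1)
    -- Δw ≤ A_w w with A_w = ((n−2)/(4(n−1))) χ_{w<1} R₀ (1 − w^{4/(n−2)}):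
    (hsub : ∀ x, Δ w x ≤
      (if w x < 1 then
          ((n : ℝ) - 2) / (4 * ((n : ℝ) - 1)) * R0 x * (1 - w x ^ (4 / ((n : ℝ) - 2)))
        else 0) * w x) :
    -- R_{g̃} ≥ R₀ in M, where R_{g̃} = w^{−(n+2)/(n−2)}(R₀ w − (4(n−1)/(n−2)) Δw):
    (∀ x, R0 x ≤ w x ^ (-(((n : ℝ) + 2) / ((n : ℝ) - 2)))
        * (R0 x * w x - 4 * ((n : ℝ) - 1) / ((n : ℝ) - 2) * Δ w x)) ∧
    -- H_{g̃} ≥ H₀ on ∂M, where H_{g̃} = w^{−n/(n−2)}(H₀ + (2(n−1)/(n−2)) ∂w/∂η):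
    (∀ x ∈ bdry, H0 x ≤ w x ^ (-((n : ℝ) / ((n : ℝ) - 2)))
        * (H0 x + 2 * ((n : ℝ) - 1) / ((n : ℝ) - 2) * Dη w x)) := by
  have hn3 : (3:ℝ) ≤ (n:ℝ) := by exact_mod_cast hn
  have hn2 : (0:ℝ) < (n:ℝ) - 2 := by linarith
  have hn1 : (0:ℝ) < (n:ℝ) - 1 := by linarith
  constructor
  · intro x
    have hw := hwpos x
    set p : ℝ := ((n:ℝ) + 2) / ((n:ℝ) - 2) with hp
    set a : ℝ := 4 / ((n:ℝ) - 2) with ha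
    set c : ℝ := 4 * ((n:ℝ) - 1) / ((n:ℝ) - 2) with hc
    have hcpos : 0 < c := by positivity
    have hwa : w x ^ a * w x = w x ^ p := by
      rw [show p = a + 1 by rw [hp, ha]; field_simp; ring, Real.rpow_add hw, Real.rpow_one]
    have key : R0 x * w x ^ p ≤ R0 x * w x - c * Δ w x := by
      have hs := hsub x
      by_cases h : w x < 1
      · rw [if_pos h] at hs
        have h2 := mul_le_mul_of_nonneg_left hs hcpos.le
        have hid : c * (((n:ℝ) - 2) / (4 * ((n:ℝ) - 1)) * R0 x * (1 - w x ^ a) * w x)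
            = R0 x * w x - R0 x * (w x ^ a * w x) := by
          rw [hc]; field_simp
        rw [hid, hwa] at h2
        linarith
      · rw [if_neg h] at hs
        have hw1 : w x = 1 := le_antisymm (hwle x) (not_lt.1 h)
        have : c * Δ w x ≤ 0 := by
          have := mul_le_mul_of_nonneg_left hs hcpos.le
          simpa using this
        rw [hw1, Real.one_rpow]
        linarith
    have hwp : (0:ℝ) ≤ w x ^ (-p) := (Real.rpow_pos_of_pos hw _).le
    have hcancel : w x ^ (-p) * w x ^ p = 1 := by
      rw [← Real.rpow_add hw]; simp
    calc R0 x = w x ^ (-p) * (R0 x * w x ^ p) := by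
          rw [mul_comm (R0 x) (w x ^ p), ← mul_assoc, hcancel, one_mul]
      _ ≤ w x ^ (-p) * (R0 x * w x - c * Δ w x) := mul_le_mul_of_nonneg_left key hwp
  · intro x hx
    have hw1 := hwbdry x hx
    have hmax : ∀ y, w y ≤ w x := by intro y; rw [hw1]; exact hwle y
    have hD := hDη w x hx hmax
    have hk : 0 ≤ 2 * ((n:ℝ) - 1) / ((n:ℝ) - 2) * Dη w x := by
      have hn3 : (3:ℝ) ≤ (n:ℝ) := by exact_mod_cast hn
      have : (0:ℝ) ≤ 2 * ((n:ℝ) - 1) / ((n:ℝ) - 2) := by positivity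
      exact mul_nonneg this hD
    rw [hw1, Real.one_rpow, one_mul]
    linarith
end

section
/- Let Ω ⊂ ℝⁿ be an open set and let u ∈ C²(Ω). Then the distributional inequality Δ(min(u,0)) ≤ χ_{{u<0}} Δu holds in Ω; that is, for every nonnegative φ ∈ C_c^∞(Ω), ∫_Ω min(u(x),0) Δφ(x) dx ≤ ∫_{{u<0}} Δu(x) φ(x) dx. -/
open MeasureTheory

/-- The Euclidean Laplacian of a function `u : ℝⁿ → ℝ`:
`Δu(x) = ∑ i, ∂²u/∂xᵢ²(x)`. -/
noncomputable def euclideanLaplacian {n : ℕ}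
    (u : EuclideanSpace ℝ (Fin n) → ℝ) (x : EuclideanSpace ℝ (Fin n)) : ℝ :=
  ∑ i : Fin n,
    fderiv ℝ (fun y => fderiv ℝ u y (EuclideanSpace.single i 1)) x
      (EuclideanSpace.single i 1)

section Auxiliary

open Set Metric Filter Topology

/-! ### Integral of a partial derivative of a compactly supported function vanishes -/

theorem aux_pi_integral_pderiv_zero {m : ℕ} (G : (Fin (m+1) → ℝ) → ℝ)
    (hG : ContDiff ℝ 1 G) (hs : HasCompactSupport G) (j : Fin (m+1)) :
    ∫ y, fderiv ℝ G y (Pi.single j 1) = 0 := by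
  obtain ⟨r, hr⟩ := hs.isBounded.subset_closedBall 0
  set R : ℝ := max r 0 with hRdef
  have hRnn : 0 ≤ R := le_max_right r 0
  have hsub : tsupport G ⊆ closedBall 0 R := hr.trans (closedBall_subset_closedBall (le_max_left r 0))
  set a : Fin (m+1) → ℝ := fun _ => -(R+1) with ha
  set b : Fin (m+1) → ℝ := fun _ => (R+1) with hb
  have hab : a ≤ b := fun i => by simp only [ha, hb]; linarith
  have hzero : ∀ x, x ∉ tsupport G → fderiv ℝ G x (Pi.single j 1) = 0 := by
    intro x hx
    have : fderiv ℝ G x = 0 := image_eq_zero_of_notMem_tsupport fun h => hx (tsupport_fderiv_subset ℝ h)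
    simp [this]
  have hmem : ∀ x ∈ tsupport G, x ∈ Icc a b := by
    intro x hx
    have hx' : ‖x‖ ≤ R := by simpa using hsub hx
    constructor <;> intro i <;>
      [ have h2 := (abs_le.mp ((norm_le_pi_norm x i).trans hx')).1;
        have h2 := (abs_le.mp ((norm_le_pi_norm x i).trans hx')).2 ] <;>
      simp only [ha, hb] <;> linarith
  set f : Fin (m+1) → (Fin (m+1) → ℝ) → ℝ := fun i => if i = j then G else fun _ => 0 with hf
  set f' : Fin (m+1) → (Fin (m+1) → ℝ) → (Fin (m+1) → ℝ) →L[ℝ] ℝ :=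
    fun i => if i = j then fderiv ℝ G else fun _ => 0 with hf'
  have hsum : ∀ x, (∑ i, f' i x (Pi.single i 1)) = fderiv ℝ G x (Pi.single j 1) := by
    intro x
    rw [Finset.sum_eq_single_of_mem j (Finset.mem_univ j)]
    · simp [hf']
    · intro i _ hij
      simp [hf', hij]
  have hcont : Continuous fun x => fderiv ℝ G x (Pi.single j 1) :=
    (hG.continuous_fderiv one_ne_zero).clm_apply continuous_const
  have key := integral_divergence_of_hasFDerivAt_off_countable' a b hab f f' ∅
    countable_empty
    (by
      intro i
      by_cases h : i = j
      · simp only [hf, if_pos h]; exact hG.continuous.continuousOn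
      · simp only [hf, if_neg h]; exact continuousOn_const)
    (by
      intro x _ i
      by_cases h : i = j
      · subst h; simpa [hf, hf'] using (hG.differentiable one_ne_zero x).hasFDerivAt
      · simpa [hf, hf', h] using hasFDerivAt_const (0:ℝ) x)
    (by
      apply (ContinuousOn.integrableOn_compact isCompact_Icc)
      exact ((continuous_finset_sum _ fun i _ => by
        by_cases h : i = j <;> simp only [hf', if_pos, if_neg, h] <;>
          [exact hcont; exact continuous_const]).continuousOn))
  have hfaces : ∀ i : Fin (m+1),
      ((∫ x in Icc (a ∘ i.succAbove) (b ∘ i.succAbove), f i (i.insertNth (b i) x)) -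
        ∫ x in Icc (a ∘ i.succAbove) (b ∘ i.succAbove), f i (i.insertNth (a i) x)) = 0 := by
    intro i
    by_cases h : i = j
    · subst h
      have h1 : ∀ c : ℝ, |c| = R + 1 → ∀ x : Fin m → ℝ, G ((i.insertNth c x : Fin (m+1) → ℝ)) = 0 := by
        intro c hc x
        apply image_eq_zero_of_notMem_tsupport
        intro hmem'
        have h3 : ‖(i.insertNth c x : Fin (m+1) → ℝ)‖ ≤ R := by simpa using hsub hmem'
        have h4 := (norm_le_pi_norm (i.insertNth c x : Fin (m+1) → ℝ) i).trans h3
        rw [Fin.insertNth_apply_same] at h4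
        simp only [Real.norm_eq_abs] at h4
        rw [hc] at h4; linarith
      simp only [hf, eq_self_iff_true, if_true]
      rw [setIntegral_congr_fun measurableSet_Icc (fun x _ => h1 (b i) (by simp [hb]; linarith) x),
        setIntegral_congr_fun measurableSet_Icc
          (fun x _ => h1 (a i) (by simp only [ha]; rw [abs_of_nonpos] <;> linarith) x)]
      simp
    · simp [hf, h]
  rw [← setIntegral_eq_integral_of_forall_compl_eq_zero (fun x hx => hzero x (fun h => hx (hmem x h)))]
  calc (∫ x in Icc a b, fderiv ℝ G x (Pi.single j 1))
      = ∫ x in Icc a b, ∑ i, f' i x (Pi.single i 1) := by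
        refine setIntegral_congr_fun measurableSet_Icc fun x _ => (hsum x).symm
    _ = _ := key
    _ = 0 := Finset.sum_eq_zero fun i _ => hfaces i

theorem aux_key_integral_zero {n : ℕ} (F : EuclideanSpace ℝ (Fin n) → ℝ)
    (hF : ContDiff ℝ 1 F) (hc : HasCompactSupport F) (i : Fin n) :
    ∫ x, fderiv ℝ F x (EuclideanSpace.single i 1) = 0 := by
  cases n with
  | zero => exact i.elim0
  | succ m =>
    set e := EuclideanSpace.equiv (Fin (m+1)) ℝ with he
    set G : (Fin (m+1) → ℝ) → ℝ := F ∘ e.symm with hGdef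
    have hG : ContDiff ℝ 1 G := hF.comp (e.symm).contDiff
    have hGc : HasCompactSupport G := hc.comp_homeomorph e.symm.toHomeomorph
    have hfd : ∀ y, fderiv ℝ G y (Pi.single i 1)
        = fderiv ℝ F (e.symm y) (EuclideanSpace.single i 1) := by
      intro y
      have h1 : fderiv ℝ G y = (fderiv ℝ F (e.symm y)).comp (e.symm : (Fin (m+1) → ℝ) →L[ℝ] _) :=
        e.symm.comp_right_fderiv
      rw [h1]
      rfl
    have hmp := (EuclideanSpace.volume_preserving_symm_measurableEquiv_toLp (Fin (m+1))).symm
    rw [← hmp.integral_comp (MeasurableEquiv.measurableEmbedding _)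
      (fun x => fderiv ℝ F x (EuclideanSpace.single i 1))]
    rw [← aux_pi_integral_pderiv_zero G hG hGc i]
    exact integral_congr_ae (Filter.Eventually.of_forall fun y => (hfd y).symm)

/-! ### Integration by parts and Green's identity -/

theorem aux_contDiff_dirderiv {n : ℕ} (f : EuclideanSpace ℝ (Fin n) → ℝ) {k : ℕ}
    (hf : ContDiff ℝ (k+1) f) (w : EuclideanSpace ℝ (Fin n)) :
    ContDiff ℝ k (fun x => fderiv ℝ f x w) :=
  ((ContinuousLinearMap.apply ℝ ℝ w).contDiff).comp (hf.fderiv_right le_rfl)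

theorem aux_hcs_dirderiv {n : ℕ} (f : EuclideanSpace ℝ (Fin n) → ℝ)
    (hc : HasCompactSupport f) (w : EuclideanSpace ℝ (Fin n)) :
    HasCompactSupport (fun x => fderiv ℝ f x w) :=
  (hc.fderiv ℝ).comp_left (g := fun L : (EuclideanSpace ℝ (Fin n)) →L[ℝ] ℝ => L w) rfl

theorem aux_continuous_laplacian {n : ℕ} {f : EuclideanSpace ℝ (Fin n) → ℝ}
    (hf : ContDiff ℝ 2 f) : Continuous (euclideanLaplacian f) := by
  apply continuous_finset_sum
  intro i _
  exact ((aux_contDiff_dirderiv f hf _).continuous_fderiv one_ne_zero).clm_apply continuous_const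

theorem aux_laplacian_zero_off_tsupport {n : ℕ} (f : EuclideanSpace ℝ (Fin n) → ℝ)
    (x : EuclideanSpace ℝ (Fin n)) (hx : x ∉ tsupport f) : euclideanLaplacian f x = 0 := by
  apply Finset.sum_eq_zero
  intro i _
  set w := EuclideanSpace.single i (1:ℝ)
  have h1 : tsupport (fun y => fderiv ℝ f y w) ⊆ tsupport f := by
    refine (closure_mono fun y hy => ?_).trans (tsupport_fderiv_subset ℝ)
    simp only [Function.mem_support] at hy ⊢
    intro h
    exact hy (by rw [h]; rfl)
  have h2 : fderiv ℝ (fun y => fderiv ℝ f y w) x = 0 :=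
    image_eq_zero_of_notMem_tsupport fun hmem => hx (h1 (tsupport_fderiv_subset ℝ hmem))
  rw [h2]
  rfl

theorem aux_ibp {n : ℕ} (f g : EuclideanSpace ℝ (Fin n) → ℝ)
    (hf : ContDiff ℝ 1 f) (hg : ContDiff ℝ 1 g)
    (hfc : HasCompactSupport f) (hgc : HasCompactSupport g) (i : Fin n) :
    ∫ x, fderiv ℝ f x (EuclideanSpace.single i 1) * g x
      = -∫ x, f x * fderiv ℝ g x (EuclideanSpace.single i 1) := by
  set w := EuclideanSpace.single i (1:ℝ) with hw
  have hP : ContDiff ℝ 1 (fun x => f x * g x) := hf.mul hg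
  have hPc : HasCompactSupport (fun x => f x * g x) := hfc.mul_right
  have hkey := aux_key_integral_zero _ hP hPc i
  have hA : Continuous fun x => fderiv ℝ f x w * g x :=
    ((hf.continuous_fderiv one_ne_zero).clm_apply continuous_const).mul hg.continuous
  have hB : Continuous fun x => f x * fderiv ℝ g x w :=
    hf.continuous.mul ((hg.continuous_fderiv one_ne_zero).clm_apply continuous_const)
  have hAc : HasCompactSupport fun x => fderiv ℝ f x w * g x := hgc.mul_left
  have hBc : HasCompactSupport fun x => f x * fderiv ℝ g x w := hfc.mul_right
  have hiA : Integrable (fun x => fderiv ℝ f x w * g x) volume :=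
    hA.integrable_of_hasCompactSupport hAc
  have hiB : Integrable (fun x => f x * fderiv ℝ g x w) volume :=
    hB.integrable_of_hasCompactSupport hBc
  have heq : ∀ x, fderiv ℝ (fun x => f x * g x) x w
      = fderiv ℝ f x w * g x + f x * fderiv ℝ g x w := by
    intro x
    rw [fderiv_fun_mul (hf.differentiable one_ne_zero x) (hg.differentiable one_ne_zero x)]
    simp only [ContinuousLinearMap.add_apply, ContinuousLinearMap.smul_apply, smul_eq_mul]
    ring
  rw [integral_congr_ae (Filter.Eventually.of_forall heq), integral_add hiA hiB] at hkey
  linarith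

theorem aux_green {n : ℕ} (f g : EuclideanSpace ℝ (Fin n) → ℝ)
    (hf : ContDiff ℝ 2 f) (hg : ContDiff ℝ 2 g)
    (hfc : HasCompactSupport f) (hgc : HasCompactSupport g) :
    ∫ x, f x * euclideanLaplacian g x = ∫ x, euclideanLaplacian f x * g x := by
  have hf1 : ContDiff ℝ 1 f := hf.of_le (by norm_num)
  have hg1 : ContDiff ℝ 1 g := hg.of_le (by norm_num)
  set w : Fin n → EuclideanSpace ℝ (Fin n) := fun i => EuclideanSpace.single i 1 with hwdef
  have hDf : ∀ i, ContDiff ℝ 1 (fun x => fderiv ℝ f x (w i)) := fun i => aux_contDiff_dirderiv f hf (w i)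
  have hDg : ∀ i, ContDiff ℝ 1 (fun x => fderiv ℝ g x (w i)) := fun i => aux_contDiff_dirderiv g hg (w i)
  have hDfc : ∀ i, HasCompactSupport (fun x => fderiv ℝ f x (w i)) := fun i => aux_hcs_dirderiv f hfc (w i)
  have hDgc : ∀ i, HasCompactSupport (fun x => fderiv ℝ g x (w i)) := fun i => aux_hcs_dirderiv g hgc (w i)
  have main : ∀ i : Fin n, ∫ x, f x * fderiv ℝ (fun y => fderiv ℝ g y (w i)) x (w i)
      = ∫ x, fderiv ℝ (fun y => fderiv ℝ f y (w i)) x (w i) * g x := by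
    intro i
    have h1 := aux_ibp _ _ (hDg i) hf1 (hDgc i) hfc i
    have h2 := aux_ibp _ _ (hDf i) hg1 (hDfc i) hgc i
    calc ∫ x, f x * fderiv ℝ (fun y => fderiv ℝ g y (w i)) x (w i)
        = ∫ x, fderiv ℝ (fun y => fderiv ℝ g y (w i)) x (w i) * f x := by
          exact integral_congr_ae (Filter.Eventually.of_forall fun x => mul_comm _ _)
      _ = -∫ x, fderiv ℝ g x (w i) * fderiv ℝ f x (w i) := h1
      _ = -∫ x, fderiv ℝ f x (w i) * fderiv ℝ g x (w i) := by
          rw [integral_congr_ae (Filter.Eventually.of_forall fun x : EuclideanSpace ℝ (Fin n) =>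
            mul_comm (fderiv ℝ g x (w i)) (fderiv ℝ f x (w i)))]
      _ = ∫ x, fderiv ℝ (fun y => fderiv ℝ f y (w i)) x (w i) * g x := h2.symm
  have hint1 : ∀ i : Fin n, Integrable (fun x => f x * fderiv ℝ (fun y => fderiv ℝ g y (w i)) x (w i)) := by
    intro i
    apply Continuous.integrable_of_hasCompactSupport
    · exact hf1.continuous.mul (((hDg i).continuous_fderiv one_ne_zero).clm_apply continuous_const)
    · exact hfc.mul_right
  have hint2 : ∀ i : Fin n, Integrable (fun x => fderiv ℝ (fun y => fderiv ℝ f y (w i)) x (w i) * g x) := by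
    intro i
    apply Continuous.integrable_of_hasCompactSupport
    · exact (((hDf i).continuous_fderiv one_ne_zero).clm_apply continuous_const).mul hg1.continuous
    · exact hgc.mul_left
  calc ∫ x, f x * euclideanLaplacian g x
      = ∫ x, ∑ i, f x * fderiv ℝ (fun y => fderiv ℝ g y (w i)) x (w i) := by
        refine integral_congr_ae (Filter.Eventually.of_forall fun x => ?_)
        simp only [euclideanLaplacian, Finset.mul_sum, hwdef]
    _ = ∑ i, ∫ x, f x * fderiv ℝ (fun y => fderiv ℝ g y (w i)) x (w i) :=
        integral_finset_sum _ fun i _ => hint1 i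
    _ = ∑ i, ∫ x, fderiv ℝ (fun y => fderiv ℝ f y (w i)) x (w i) * g x :=
        Finset.sum_congr rfl fun i _ => main i
    _ = ∫ x, ∑ i, fderiv ℝ (fun y => fderiv ℝ f y (w i)) x (w i) * g x :=
        (integral_finset_sum _ fun i _ => hint2 i).symm
    _ = ∫ x, euclideanLaplacian f x * g x := by
        refine integral_congr_ae (Filter.Eventually.of_forall fun x => ?_)
        simp only [euclideanLaplacian, Finset.sum_mul, hwdef]

/-! ### The smooth concave approximations of `t ↦ min t 0` -/

noncomputable def smin (a t : ℝ) : ℝ := (t + a - Real.sqrt ((t + a)^2 + a^4)) / 2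

lemma aux_qpos {a : ℝ} (ha : a ≠ 0) (t : ℝ) : 0 < (t + a)^2 + a^4 := by positivity

lemma aux_rpos {a : ℝ} (ha : a ≠ 0) (t : ℝ) : 0 < Real.sqrt ((t + a)^2 + a^4) :=
  Real.sqrt_pos.mpr (aux_qpos ha t)

lemma aux_abs_le_r (a t : ℝ) : |t + a| ≤ Real.sqrt ((t + a)^2 + a^4) := by
  rw [← Real.sqrt_sq_eq_abs]
  exact Real.sqrt_le_sqrt (by nlinarith [sq_nonneg (a^2)])

lemma aux_hasDerivAt_smin {a : ℝ} (ha : a ≠ 0) (t : ℝ) :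
    HasDerivAt (smin a) ((1 - (t + a) / Real.sqrt ((t + a)^2 + a^4)) / 2) t := by
  have hq : HasDerivAt (fun t : ℝ => (t + a)^2 + a^4) (2 * (t + a)) t := by
    have h1 : HasDerivAt (fun t : ℝ => (t + a)^2) (2 * (t + a) ^ 1 * 1) t :=
      (((hasDerivAt_id t).add_const a)).pow 2 |>.congr_deriv (by (try simp only [id_eq]); ring)
    simpa using (h1.add_const (a^4)).congr_deriv (by (try simp only [id_eq]); ring)
  have hs : HasDerivAt (fun t : ℝ => Real.sqrt ((t + a)^2 + a^4))
      (1 / (2 * Real.sqrt ((t + a)^2 + a^4)) * (2 * (t + a))) t :=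
    (Real.hasDerivAt_sqrt (ne_of_gt (aux_qpos ha t))).comp t hq
  have h2 : HasDerivAt (fun t : ℝ => t + a) 1 t := (hasDerivAt_id t).add_const a
  have := (h2.sub hs).div_const 2
  refine this.congr_deriv ?_
  have hr := (aux_rpos ha t).ne'
  field_simp

lemma aux_deriv_smin {a : ℝ} (ha : a ≠ 0) (t : ℝ) :
    deriv (smin a) t = (1 - (t + a) / Real.sqrt ((t + a)^2 + a^4)) / 2 :=
  (aux_hasDerivAt_smin ha t).deriv

lemma aux_contDiff_smin {a : ℝ} (ha : a ≠ 0) : ContDiff ℝ 2 (smin a) := by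
  have h1 : ContDiff ℝ 2 (fun t : ℝ => Real.sqrt ((t + a)^2 + a^4)) := by
    rw [contDiff_iff_contDiffAt]
    intro t
    exact (Real.contDiffAt_sqrt (ne_of_gt (aux_qpos ha t))).comp t
      (((contDiff_id.add contDiff_const).pow 2).add contDiff_const).contDiffAt
  exact (((contDiff_id.add contDiff_const).sub h1).div_const 2)

lemma aux_deriv_smin_mem {a : ℝ} (ha : 0 < a) (t : ℝ) : deriv (smin a) t ∈ Set.Icc (0:ℝ) 1 := by
  rw [aux_deriv_smin ha.ne']
  have h1 := aux_abs_le_r a t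
  have h2 := aux_rpos ha.ne' t
  have h3 : |(t + a) / Real.sqrt ((t + a)^2 + a^4)| ≤ 1 := by
    rw [abs_div, abs_of_pos h2]
    exact div_le_one_of_le₀ h1 h2.le
  rw [abs_le] at h3
  constructor <;> [linarith [h3.2]; linarith [h3.1]]

lemma aux_hasDerivAt_deriv_smin {a : ℝ} (ha : a ≠ 0) (t : ℝ) :
    HasDerivAt (deriv (smin a)) (-(a^4 / (Real.sqrt ((t + a)^2 + a^4))^3) / 2) t := by
  have hfun : deriv (smin a) = fun t => (1 - (t + a) / Real.sqrt ((t + a)^2 + a^4)) / 2 :=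
    funext fun t => aux_deriv_smin ha t
  rw [hfun]
  have hq : HasDerivAt (fun t : ℝ => (t + a)^2 + a^4) (2 * (t + a)) t := by
    have h1 : HasDerivAt (fun t : ℝ => (t + a)^2) (2 * (t + a) ^ 1 * 1) t :=
      (((hasDerivAt_id t).add_const a)).pow 2 |>.congr_deriv (by (try simp only [id_eq]); ring)
    simpa using (h1.add_const (a^4)).congr_deriv (by (try simp only [id_eq]); ring)
  have hs : HasDerivAt (fun t : ℝ => Real.sqrt ((t + a)^2 + a^4))
      (1 / (2 * Real.sqrt ((t + a)^2 + a^4)) * (2 * (t + a))) t :=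
    (Real.hasDerivAt_sqrt (ne_of_gt (aux_qpos ha t))).comp t hq
  have h2 : HasDerivAt (fun t : ℝ => t + a) 1 t := (hasDerivAt_id t).add_const a
  have hr := aux_rpos ha t
  have hdiv := h2.div hs hr.ne'
  have := ((hasDerivAt_const t (1:ℝ)).sub hdiv).div_const 2
  refine this.congr_deriv ?_
  have hsq : Real.sqrt ((t + a)^2 + a^4) ^ 2 = (t + a)^2 + a^4 := Real.sq_sqrt (aux_qpos ha t).le
  field_simp
  linear_combination -hsq

lemma aux_deriv2_smin_nonpos {a : ℝ} (ha : 0 < a) (t : ℝ) :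
    deriv (deriv (smin a)) t ≤ 0 := by
  rw [(aux_hasDerivAt_deriv_smin ha.ne' t).deriv]
  have h4 : (0:ℝ) < a^4 := by positivity
  have h5 : (0:ℝ) < Real.sqrt ((t + a)^2 + a^4)^3 := by
    have := aux_rpos ha.ne' t
    positivity
  have := div_pos h4 h5
  linarith

lemma aux_abs_smin_le {a : ℝ} (ha : 0 < a) (ha1 : a ≤ 1) (t : ℝ) : |smin a t| ≤ |t| + 2 := by
  have h1 := aux_abs_le_r a t
  have h2 : Real.sqrt ((t + a)^2 + a^4) ≤ |t + a| + a^2 := by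
    rw [show |t + a| + a^2 = Real.sqrt ((|t + a| + a^2)^2) from (Real.sqrt_sq (by positivity)).symm]
    apply Real.sqrt_le_sqrt
    nlinarith [abs_nonneg (t + a), sq_abs (t + a), sq_nonneg a]
  have h3 : t + a ≤ Real.sqrt ((t + a)^2 + a^4) := (le_abs_self _).trans h1
  have habs : |smin a t| = (Real.sqrt ((t + a)^2 + a^4) - (t + a)) / 2 := by
    unfold smin
    rw [abs_div, abs_of_nonpos (by linarith), abs_of_pos (by norm_num : (0:ℝ) < 2)]
    ring
  have h4 : |t + a| ≤ |t| + a := by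
    calc |t + a| ≤ |t| + |a| := abs_add_le t a
    _ = |t| + a := by rw [abs_of_pos ha]
  rw [habs]
  have h5 : a^2 ≤ 1 := by nlinarith
  nlinarith [abs_nonneg t, neg_abs_le (t + a)]

lemma aux_tendsto_smin (t : ℝ) :
    Filter.Tendsto (fun k : ℕ => smin (1/(k+1)) t) Filter.atTop (nhds (min t 0)) := by
  have hc : Continuous fun a : ℝ => smin a t := by
    unfold smin
    fun_prop
  have h0 : smin 0 t = min t 0 := by
    unfold smin
    rw [show (t + 0)^2 + (0:ℝ)^4 = t^2 by ring, Real.sqrt_sq_eq_abs]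
    rcases le_or_gt 0 t with h | h
    · rw [abs_of_nonneg h, min_eq_right h]; ring
    · rw [abs_of_neg h, min_eq_left h.le]; ring
  have := (hc.continuousAt (x := 0)).tendsto.comp tendsto_one_div_add_atTop_nhds_zero_nat
  rwa [h0] at this

lemma aux_tendsto_deriv_smin (t : ℝ) :
    Filter.Tendsto (fun k : ℕ => deriv (smin (1/(k+1))) t) Filter.atTop
      (nhds (if t < 0 then 1 else 0)) := by
  have hpos : ∀ k : ℕ, (0:ℝ) < 1/(k+1) := fun k => by positivity
  have hform : ∀ k : ℕ, deriv (smin (1/(k+1))) t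
      = (1 - (t + 1/(k+1)) / Real.sqrt ((t + 1/(k+1))^2 + (1/(k+1))^4)) / 2 :=
    fun k => aux_deriv_smin (hpos k).ne' t
  rcases eq_or_ne t 0 with rfl | ht
  · simp only [lt_irrefl, if_neg (lt_irrefl (0:ℝ))]
    have heq : ∀ k : ℕ, deriv (smin (1/(k+1))) 0 = (1 - 1 / Real.sqrt (1 + (1/(k+1))^2)) / 2 := by
      intro k
      rw [hform k]
      set a : ℝ := 1/(k+1) with hadef
      have ha := hpos k
      have h1 : Real.sqrt ((0 + a)^2 + a^4) = a * Real.sqrt (1 + a^2) := by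
        rw [show (0 + a)^2 + a^4 = a^2 * (1 + a^2) by ring, Real.sqrt_mul (sq_nonneg a),
          Real.sqrt_sq ha.le]
      rw [h1]
      congr 2
      rw [zero_add]
      rw [div_eq_div_iff (by positivity) (by positivity)]
      ring
    rw [funext heq]
    have hc : Continuous fun a : ℝ => (1 - 1 / Real.sqrt (1 + a^2)) / 2 := by
      refine (continuous_const.sub (continuous_const.div
        (Real.continuous_sqrt.comp (by fun_prop)) fun a => ?_)).div_const 2
      exact Real.sqrt_ne_zero'.mpr (by positivity)
    have := (hc.continuousAt (x := 0)).tendsto.comp tendsto_one_div_add_atTop_nhds_zero_nat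
    simp only [Function.comp_def] at this ⊢
    convert this using 2
    norm_num
  · have hc : ContinuousAt (fun a : ℝ => (1 - (t + a) / Real.sqrt ((t + a)^2 + a^4)) / 2) 0 := by
      have hden : ContinuousAt (fun a : ℝ => Real.sqrt ((t + a)^2 + a^4)) 0 := by fun_prop
      have hden0 : Real.sqrt ((t + 0)^2 + 0^4) ≠ 0 := by
        rw [show (t + 0)^2 + (0:ℝ)^4 = t^2 by ring, Real.sqrt_sq_eq_abs]
        simpa using ht
      have hnum : ContinuousAt (fun a : ℝ => t + a) 0 := by fun_prop
      exact ((continuousAt_const.sub (hnum.div hden hden0)).div_const 2)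
    have := hc.tendsto.comp tendsto_one_div_add_atTop_nhds_zero_nat
    have hval : (1 - (t + 0) / Real.sqrt ((t + 0)^2 + 0^4)) / 2 = if t < 0 then 1 else 0 := by
      rw [show (t + 0)^2 + (0:ℝ)^4 = t^2 by ring, Real.sqrt_sq_eq_abs, add_zero]
      rcases lt_or_ge t 0 with h | h
      · rw [if_pos h, abs_of_neg h]
        field_simp
        norm_num
      · rw [if_neg (not_lt.mpr h), abs_of_nonneg h]
        have : t ≠ 0 := ht
        field_simp
        norm_num
    rw [hval] at this
    exact Filter.Tendsto.congr (fun k => (hform k).symm) this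

/-! ### Chain rule for the Laplacian -/

lemma aux_euclideanLaplacian_congr {n : ℕ} {f g : EuclideanSpace ℝ (Fin n) → ℝ}
    {x : EuclideanSpace ℝ (Fin n)} (h : f =ᶠ[nhds x] g) :
    euclideanLaplacian f x = euclideanLaplacian g x := by
  obtain ⟨O, hOsub, hOopen, hxO⟩ := _root_.mem_nhds_iff.mp h
  unfold euclideanLaplacian
  refine Finset.sum_congr rfl fun i _ => ?_
  have h1 : (fun y => fderiv ℝ f y (EuclideanSpace.single i 1))
      =ᶠ[nhds x] (fun y => fderiv ℝ g y (EuclideanSpace.single i 1)) := by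
    refine Filter.eventually_of_mem (hOopen.mem_nhds hxO) fun y hy => ?_
    have hy' : f =ᶠ[nhds y] g := Filter.eventually_of_mem (hOopen.mem_nhds hy) fun z hz => hOsub hz
    show fderiv ℝ f y (EuclideanSpace.single i 1) = fderiv ℝ g y (EuclideanSpace.single i 1)
    rw [hy'.fderiv_eq]
  rw [h1.fderiv_eq]

lemma aux_laplacian_comp {n : ℕ} {Ω : Set (EuclideanSpace ℝ (Fin n))} (hΩ : IsOpen Ω)
    {u : EuclideanSpace ℝ (Fin n) → ℝ} (hu : ContDiffOn ℝ 2 u Ω)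
    {β : ℝ → ℝ} (hβ : ContDiff ℝ 2 β) {x : EuclideanSpace ℝ (Fin n)} (hx : x ∈ Ω) :
    euclideanLaplacian (fun y => β (u y)) x
      = deriv (deriv β) (u x) * (∑ i, (fderiv ℝ u x (EuclideanSpace.single i 1))^2)
        + deriv β (u x) * euclideanLaplacian u x := by
  have hud : ∀ y ∈ Ω, DifferentiableAt ℝ u y := fun y hy =>
    ((hu.differentiableOn (by norm_num)).differentiableAt (hΩ.mem_nhds hy))
  have hβd : Differentiable ℝ β := hβ.differentiable (by norm_num)
  have hβ' : ContDiff ℝ 1 (deriv β) := by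
    have : ContDiff ℝ ((1:ℕ∞) + 1) β := by exact_mod_cast hβ
    exact (contDiff_succ_iff_deriv.mp this).2.2
  have hchain : ∀ y ∈ Ω, fderiv ℝ (fun z => β (u z)) y = deriv β (u y) • fderiv ℝ u y :=
    fun y hy => (HasDerivAt.comp_hasFDerivAt y (hβd (u y)).hasDerivAt
      (hud y hy).hasFDerivAt).fderiv
  have hu1 : ContDiffOn ℝ 1 (fderiv ℝ u) Ω := hu.fderiv_of_isOpen hΩ (by norm_num)
  unfold euclideanLaplacian
  rw [Finset.mul_sum, Finset.mul_sum, ← Finset.sum_add_distrib]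
  refine Finset.sum_congr rfl fun i _ => ?_
  set w := EuclideanSpace.single i (1:ℝ) with hw
  have hfdx : DifferentiableAt ℝ (fderiv ℝ u) x :=
    (hu1.differentiableOn one_ne_zero).differentiableAt (hΩ.mem_nhds hx)
  have hq_diff : DifferentiableAt ℝ (fun y => fderiv ℝ u y w) x :=
    (ContinuousLinearMap.apply ℝ ℝ w).differentiable.differentiableAt.comp x hfdx
  have hp_hasf : HasFDerivAt (fun y => deriv β (u y))
      (deriv (deriv β) (u x) • fderiv ℝ u x) x :=
    HasDerivAt.comp_hasFDerivAt x ((hβ'.differentiable one_ne_zero) (u x)).hasDerivAt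
      (hud x hx).hasFDerivAt
  have heq : (fun y => fderiv ℝ (fun z => β (u z)) y w)
      =ᶠ[nhds x] (fun y => deriv β (u y) * fderiv ℝ u y w) := by
    refine Filter.eventually_of_mem (hΩ.mem_nhds hx) fun y hy => ?_
    show fderiv ℝ (fun z => β (u z)) y w = deriv β (u y) * fderiv ℝ u y w
    rw [hchain y hy]
    simp
  rw [heq.fderiv_eq, fderiv_fun_mul hp_hasf.differentiableAt hq_diff]
  simp only [ContinuousLinearMap.add_apply, ContinuousLinearMap.smul_apply, smul_eq_mul,
    hp_hasf.fderiv]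
  ring

/-! ### Smooth cutoff functions -/

lemma aux_cutoff_exists {n : ℕ} (K U : Set (EuclideanSpace ℝ (Fin n))) (hK : IsCompact K)
    (hU : IsOpen U) (hKU : K ⊆ U) :
    ∃ ψ : EuclideanSpace ℝ (Fin n) → ℝ, ContDiff ℝ (⊤:ℕ∞) ψ ∧ HasCompactSupport ψ ∧
      tsupport ψ ⊆ U ∧ (∀ x ∈ K, ψ x = 1) ∧ ∀ x, ψ x ∈ Set.Icc (0:ℝ) 1 := by
  obtain ⟨δ, hδ, hsub⟩ := hK.exists_cthickening_subset_open hU hKU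
  have hKthick : K ⊆ thickening δ K := self_subset_thickening hδ K
  have hdisj : Disjoint ((thickening δ K)ᶜ) K :=
    disjoint_compl_left.mono_right hKthick
  obtain ⟨f, hf0, hf1, hficc⟩ := exists_contMDiffMap_zero_one_of_isClosed (n := (⊤ : ℕ∞))
    (modelWithCornersSelf ℝ (EuclideanSpace ℝ (Fin n)))
    (isOpen_thickening.isClosed_compl) hK.isClosed hdisj
  have hsupp : Function.support f ⊆ thickening δ K := by
    intro x hx
    by_contra hmem
    exact hx (hf0 hmem)
  have htsupp : tsupport f ⊆ cthickening δ K :=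
    closure_minimal (hsupp.trans (thickening_subset_cthickening δ K)) isClosed_cthickening
  refine ⟨f, contMDiff_iff_contDiff.mp f.contMDiff, ?_, htsupp.trans hsub,
    fun x hx => hf1 hx, hficc⟩
  exact IsCompact.of_isClosed_subset (hK.cthickening) (isClosed_tsupport f) htsupp

/-! ### Gluing continuity -/

lemma aux_continuous_glue {X : Type*} [TopologicalSpace X] {f : X → ℝ} {U V : Set X}
    (hU : IsOpen U) (hV : IsOpen V) (hcov : ∀ x, x ∈ U ∨ x ∈ V)
    (hfU : ContinuousOn f U) (hfV : ∀ x ∈ V, f x = 0) : Continuous f := by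
  rw [continuous_iff_continuousAt]
  intro x
  rcases hcov x with hx | hx
  · exact hfU.continuousAt (hU.mem_nhds hx)
  · have h : f =ᶠ[nhds x] fun _ => 0 := Filter.eventually_of_mem (hV.mem_nhds hx) hfV
    exact continuousAt_const.congr h.symm

end Auxiliary

open Set Metric Filter Topology

/-- **Distributional inequality for the truncation `min(u, 0)` of a `C²` function.**
Let `Ω ⊂ ℝⁿ` be open and `u ∈ C²(Ω)`.  Then `Δ(min(u,0)) ≤ χ_{u<0} Δu` holds in the
sense of distributions in `Ω`: for every nonnegative `φ ∈ C_c^∞(Ω)`,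
`∫_Ω min(u,0) Δφ dx ≤ ∫_{u<0} Δu φ dx`. -/
theorem distributional_laplacian_min_le
    {n : ℕ} (Ω : Set (EuclideanSpace ℝ (Fin n))) (hΩ : IsOpen Ω)
    (u : EuclideanSpace ℝ (Fin n) → ℝ) (hu : ContDiffOn ℝ 2 u Ω)
    (φ : EuclideanSpace ℝ (Fin n) → ℝ) (hφ : ContDiff ℝ (⊤ : ℕ∞) φ)
    (hφsupp : HasCompactSupport φ) (hφΩ : tsupport φ ⊆ Ω)
    (hφpos : ∀ x, 0 ≤ φ x) :
    ∫ x in Ω, min (u x) 0 * euclideanLaplacian φ x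
      ≤ ∫ x in {x ∈ Ω | u x < 0}, euclideanLaplacian u x * φ x := by
  classical
  have hφ2 : ContDiff ℝ 2 φ := hφ.of_le (by norm_cast)
  -- a cutoff ψ which is 1 on a neighborhood of tsupport φ and supported in Ω
  obtain ⟨δ, hδpos, hδsub⟩ := hφsupp.exists_cthickening_subset_open hΩ hφΩ
  set K := cthickening δ (tsupport φ) with hKdef
  set O := thickening δ (tsupport φ) with hOdef
  obtain ⟨ψ, hψs, hψc, hψΩ, hψ1, hψicc⟩ := aux_cutoff_exists K Ω (hφsupp.cthickening) hΩ hδsub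
  have hOK : O ⊆ K := thickening_subset_cthickening δ _
  have hψ1O : ∀ x ∈ O, ψ x = 1 := fun x hx => hψ1 x (hOK hx)
  have hOop : IsOpen O := isOpen_thickening
  have hφO : tsupport φ ⊆ O := self_subset_thickening hδpos _
  have hψ2 : ContDiff ℝ 2 ψ := hψs.of_le (by norm_cast)
  -- vanishing of Δφ off the support of φ
  have hΔφ0 : ∀ x, x ∉ tsupport φ → euclideanLaplacian φ x = 0 :=
    fun x hx => aux_laplacian_zero_off_tsupport φ x hx
  have hΔφc : Continuous (euclideanLaplacian φ) := aux_continuous_laplacian hφ2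
  -- continuity of Δu on Ω
  have hu1 : ContDiffOn ℝ 1 (fderiv ℝ u) Ω := hu.fderiv_of_isOpen hΩ (by norm_num)
  have hΔu_cont : ContinuousOn (euclideanLaplacian u) Ω := by
    apply continuousOn_finset_sum
    intro i _
    have hq' := (ContinuousLinearMap.apply ℝ ℝ
      (EuclideanSpace.single i 1)).contDiff.comp_contDiffOn hu1
    have hq : ContDiffOn ℝ 1 (fun y => fderiv ℝ u y (EuclideanSpace.single i 1)) Ω := hq'
    have hq' : ContDiffOn ℝ 0 (fderiv ℝ (fun y => fderiv ℝ u y (EuclideanSpace.single i 1))) Ω :=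
      hq.fderiv_of_isOpen hΩ (by norm_num)
    exact (contDiffOn_zero.mp hq').clm_apply continuousOn_const
  -- the covering Ω ∪ (tsupport φ)ᶜ = univ
  have hcov : ∀ x : EuclideanSpace ℝ (Fin n), x ∈ Ω ∨ x ∈ (tsupport φ)ᶜ := by
    intro x
    by_cases hx : x ∈ tsupport φ
    · exact Or.inl (hφΩ hx)
    · exact Or.inr hx
  have hφcont : Continuous φ := hφ2.continuous
  have hφ0 : ∀ x, x ∉ tsupport φ → φ x = 0 := fun x hx => image_eq_zero_of_notMem_tsupport hx
  -- the open set S = {x ∈ Ω | u x < 0}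
  set S := {x ∈ Ω | u x < 0} with hSdef
  have hSopen : IsOpen S := by
    have : S = Ω ∩ u ⁻¹' (Iio 0) := rfl
    rw [this]
    exact hu.continuousOn.isOpen_inter_preimage hΩ isOpen_Iio
  -- the sequence of approximations
  set a : ℕ → ℝ := fun k => 1/(k+1) with hadef
  have hapos : ∀ k, (0:ℝ) < a k := fun k => by positivity
  have hale : ∀ k, a k ≤ 1 := by
    intro k
    rw [hadef]
    rw [div_le_one (by positivity)]
    simp
  set β : ℕ → ℝ → ℝ := fun k => smin (a k) with hβdef
  have hβ2 : ∀ k, ContDiff ℝ 2 (β k) := fun k => aux_contDiff_smin (hapos k).ne'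
  set v : ℕ → EuclideanSpace ℝ (Fin n) → ℝ := fun k x => ψ x * β k (u x) with hvdef
  -- v is C² and compactly supported
  have hv2 : ∀ k, ContDiff ℝ 2 (v k) := by
    intro k
    rw [← contDiffOn_univ]
    apply contDiffOn_of_locally_contDiffOn
    intro x _
    rcases hcov x with hx | _
    · exact ⟨Ω, hΩ, hx, by
        rw [Set.univ_inter]
        exact (hψ2.contDiffOn).mul
          (ContDiffOn.congr ((hβ2 k).comp_contDiffOn hu) fun y _ => rfl) ⟩
    · by_cases hx' : x ∈ tsupport ψ
      · exact ⟨Ω, hΩ, hψΩ hx', by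
          rw [Set.univ_inter]
          exact (hψ2.contDiffOn).mul
            (ContDiffOn.congr ((hβ2 k).comp_contDiffOn hu) fun y _ => rfl)⟩
      · refine ⟨(tsupport ψ)ᶜ, (isClosed_tsupport ψ).isOpen_compl, hx', ?_⟩
        rw [Set.univ_inter]
        refine ContDiffOn.congr (contDiffOn_const (c := (0:ℝ))) fun y hy => ?_
        show ψ y * β k (u y) = 0
        rw [image_eq_zero_of_notMem_tsupport hy, zero_mul]
  have hvc : ∀ k, HasCompactSupport (v k) := fun k => hψc.mul_right
  -- continuity and integrability facts
  have hG_cont : ∀ k, Continuous fun x => deriv (β k) (u x) * euclideanLaplacian u x * φ x := by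
    intro k
    apply aux_continuous_glue hΩ (isClosed_tsupport φ).isOpen_compl hcov
    · have hβ' : Continuous (deriv (β k)) := by
        have h1 : ContDiff ℝ ((1:ℕ∞)+1) (β k) := by exact_mod_cast hβ2 k
        exact ((contDiff_succ_iff_deriv.mp h1).2.2).continuous
      exact ((hβ'.comp_continuousOn hu.continuousOn).mul hΔu_cont).mul hφcont.continuousOn
    · intro x hx
      rw [hφ0 x hx, mul_zero]
  have hG_cs : ∀ k, HasCompactSupport fun x => deriv (β k) (u x) * euclideanLaplacian u x * φ x := by
    intro k
    apply HasCompactSupport.intro hφsupp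
    intro x hx
    rw [hφ0 x hx, mul_zero]
  have hG_int : ∀ k, Integrable (fun x => deriv (β k) (u x) * euclideanLaplacian u x * φ x) volume :=
    fun k => (hG_cont k).integrable_of_hasCompactSupport (hG_cs k)
  have hΔv_int : ∀ k, Integrable (fun x => euclideanLaplacian (v k) x * φ x) volume := by
    intro k
    exact ((aux_continuous_laplacian (hv2 k)).mul hφcont).integrable_of_hasCompactSupport
      hφsupp.mul_left
  have hF_cont : ∀ k, Continuous fun x => β k (u x) * euclideanLaplacian φ x := by
    intro k
    apply aux_continuous_glue hΩ (isClosed_tsupport φ).isOpen_compl hcov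
    · exact ((hβ2 k).continuous.comp_continuousOn hu.continuousOn).mul hΔφc.continuousOn
    · intro x hx
      rw [hΔφ0 x hx, mul_zero]
  have hF_cs : ∀ k, HasCompactSupport fun x => β k (u x) * euclideanLaplacian φ x := by
    intro k
    apply HasCompactSupport.intro hφsupp
    intro x hx
    rw [hΔφ0 x hx, mul_zero]
  -- Step A: for each k, ∫ βₖ(u) Δφ = ∫ v k Δφ = ∫ Δ(v k) φ ≤ ∫ βₖ'(u) Δu φ
  have stepA : ∀ k, ∫ x, β k (u x) * euclideanLaplacian φ x
      ≤ ∫ x, deriv (β k) (u x) * euclideanLaplacian u x * φ x := by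
    intro k
    have h1 : ∫ x, β k (u x) * euclideanLaplacian φ x = ∫ x, v k x * euclideanLaplacian φ x := by
      refine integral_congr_ae (Filter.Eventually.of_forall fun x => ?_)
      by_cases hx : x ∈ tsupport φ
      · have : ψ x = 1 := hψ1O x (hφO hx)
        show β k (u x) * euclideanLaplacian φ x = ψ x * β k (u x) * euclideanLaplacian φ x
        rw [this, one_mul]
      · show β k (u x) * euclideanLaplacian φ x = ψ x * β k (u x) * euclideanLaplacian φ x
        rw [hΔφ0 x hx, mul_zero, mul_zero]
    have h2 : ∫ x, v k x * euclideanLaplacian φ x = ∫ x, euclideanLaplacian (v k) x * φ x :=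
      aux_green (v k) φ (hv2 k) hφ2 (hvc k) hφsupp
    have h3 : ∫ x, euclideanLaplacian (v k) x * φ x
        ≤ ∫ x, deriv (β k) (u x) * euclideanLaplacian u x * φ x := by
      apply integral_mono (hΔv_int k) (hG_int k)
      intro x
      show euclideanLaplacian (v k) x * φ x
        ≤ deriv (β k) (u x) * euclideanLaplacian u x * φ x
      by_cases hx : φ x = 0
      · rw [hx, mul_zero, mul_zero]
      · have hxsupp : x ∈ tsupport φ := subset_closure (Function.mem_support.mpr hx)
        have hxO : x ∈ O := hφO hxsupp
        have hxΩ : x ∈ Ω := hφΩ hxsupp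
        have hveq : v k =ᶠ[nhds x] fun y => β k (u y) := by
          refine Filter.eventually_of_mem ((hOop.inter hΩ).mem_nhds ⟨hxO, hxΩ⟩) fun y hy => ?_
          show ψ y * β k (u y) = β k (u y)
          rw [hψ1O y hy.1, one_mul]
        have hlap : euclideanLaplacian (v k) x = euclideanLaplacian (fun y => β k (u y)) x :=
          aux_euclideanLaplacian_congr hveq
        rw [hlap, aux_laplacian_comp hΩ hu (hβ2 k) hxΩ]
        have hd2 : deriv (deriv (β k)) (u x) ≤ 0 := aux_deriv2_smin_nonpos (hapos k) (u x)
        have hsq : (0:ℝ) ≤ ∑ i, (fderiv ℝ u x (EuclideanSpace.single i 1))^2 :=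
          Finset.sum_nonneg fun i _ => sq_nonneg _
        have hφx : 0 ≤ φ x := hφpos x
        have hterm : deriv (deriv (β k)) (u x)
            * (∑ i, (fderiv ℝ u x (EuclideanSpace.single i 1))^2) * φ x ≤ 0 :=
          mul_nonpos_of_nonpos_of_nonneg (mul_nonpos_of_nonpos_of_nonneg hd2 hsq) hφx
        nlinarith [hterm]
    calc ∫ x, β k (u x) * euclideanLaplacian φ x
        = ∫ x, euclideanLaplacian (v k) x * φ x := h1.trans h2
      _ ≤ _ := h3
  -- Step B: limits
  have bound1 : Integrable (fun x => (|u x| + 2) * |euclideanLaplacian φ x|) volume := by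
    apply Continuous.integrable_of_hasCompactSupport
    · apply aux_continuous_glue hΩ (isClosed_tsupport φ).isOpen_compl hcov
      · exact ((hu.continuousOn.abs.add continuousOn_const)).mul hΔφc.continuousOn.abs
      · intro x hx
        rw [hΔφ0 x hx, abs_zero, mul_zero]
    · apply HasCompactSupport.intro hφsupp
      intro x hx
      rw [hΔφ0 x hx, abs_zero, mul_zero]
  have bound2 : Integrable (fun x => |euclideanLaplacian u x * φ x|) volume := by
    apply Continuous.integrable_of_hasCompactSupport
    · apply aux_continuous_glue hΩ (isClosed_tsupport φ).isOpen_compl hcov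
      · exact (hΔu_cont.mul hφcont.continuousOn).abs
      · intro x hx
        rw [hφ0 x hx, mul_zero, abs_zero]
    · apply HasCompactSupport.intro hφsupp
      intro x hx
      rw [hφ0 x hx, mul_zero, abs_zero]
  have lhs_tendsto : Filter.Tendsto (fun k => ∫ x, β k (u x) * euclideanLaplacian φ x)
      Filter.atTop (nhds (∫ x, min (u x) 0 * euclideanLaplacian φ x)) := by
    apply MeasureTheory.tendsto_integral_of_dominated_convergence
      (fun x => (|u x| + 2) * |euclideanLaplacian φ x|)
      (fun k => ((hF_cont k).aestronglyMeasurable))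
      bound1
    · intro k
      refine Filter.Eventually.of_forall fun x => ?_
      rw [norm_mul, Real.norm_eq_abs, Real.norm_eq_abs]
      exact mul_le_mul_of_nonneg_right (aux_abs_smin_le (hapos k) (hale k) (u x)) (abs_nonneg _)
    · refine Filter.Eventually.of_forall fun x => ?_
      exact (aux_tendsto_smin (u x)).mul_const _
  have rhs_tendsto : Filter.Tendsto
      (fun k => ∫ x, deriv (β k) (u x) * euclideanLaplacian u x * φ x)
      Filter.atTop (nhds (∫ x, S.indicator (fun x => euclideanLaplacian u x * φ x) x)) := by
    apply MeasureTheory.tendsto_integral_of_dominated_convergence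
      (fun x => |euclideanLaplacian u x * φ x|)
      (fun k => (hG_cont k).aestronglyMeasurable)
      bound2
    · intro k
      refine Filter.Eventually.of_forall fun x => ?_
      rw [mul_assoc, norm_mul]
      have hm := aux_deriv_smin_mem (hapos k) (u x)
      have h1 : ‖deriv (β k) (u x)‖ ≤ 1 := by
        rw [Real.norm_eq_abs, abs_le]
        exact ⟨by linarith [hm.1], hm.2⟩
      calc ‖deriv (β k) (u x)‖ * ‖euclideanLaplacian u x * φ x‖
          ≤ 1 * ‖euclideanLaplacian u x * φ x‖ := by gcongr
        _ = |euclideanLaplacian u x * φ x| := by rw [one_mul]; rfl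
    · refine Filter.Eventually.of_forall fun x => ?_
      have hbase := (aux_tendsto_deriv_smin (u x)).mul_const (euclideanLaplacian u x * φ x)
      have hval : (if u x < 0 then (1:ℝ) else 0) * (euclideanLaplacian u x * φ x)
          = S.indicator (fun x => euclideanLaplacian u x * φ x) x := by
        by_cases hx : x ∈ S
        · rw [Set.indicator_of_mem hx, if_pos hx.2, one_mul]
        · rw [Set.indicator_of_notMem hx]
          by_cases hu0 : u x < 0
          · have hxΩ : x ∉ Ω := fun h => hx ⟨h, hu0⟩
            have : φ x = 0 := hφ0 x fun h => hxΩ (hφΩ h)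
            rw [if_pos hu0, one_mul, this, mul_zero]
          · rw [if_neg hu0, zero_mul]
      rw [← hval]
      refine hbase.congr fun k => ?_
      rw [mul_assoc]
  -- Step C: rewrite the two sides of the goal as the limit integrals
  have hLHS : ∫ x in Ω, min (u x) 0 * euclideanLaplacian φ x
      = ∫ x, min (u x) 0 * euclideanLaplacian φ x := by
    apply setIntegral_eq_integral_of_forall_compl_eq_zero
    intro x hx
    have : x ∉ tsupport φ := fun h => hx (hφΩ h)
    rw [hΔφ0 x this, mul_zero]
  have hRHS : ∫ x in S, euclideanLaplacian u x * φ x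
      = ∫ x, S.indicator (fun x => euclideanLaplacian u x * φ x) x :=
    (integral_indicator hSopen.measurableSet).symm
  rw [hLHS, hRHS]
  exact le_of_tendsto_of_tendsto' lhs_tendsto rhs_tendsto stepA
end
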